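/- arXiv:1508.02279 — 12 statements merged into one kernel-verified Lean document; each statement's English description precedes it below -/
import Mathlib

section
/- Let H be a Hermitian n×n complex matrix, (Γ_k) a finite family of n×n complex matrices, (γ_k) real numbers, and ħ a real number. Let W and W' be n×n complex matrices and set ρ = W*Wᴴ. If i·ħ·(W'*Wᴴ + W*(W')ᴴ) = L(ρ) (i.e. W is a differentiable purification of a solution of the Lindblad equation, with derivative W'), then the matrix K = i·ħ·W'*Wᴴ − (H*ρ − (i/2)·Σ_k γ_k·Γ_kᴴ*Γ_k*ρ + (i/2)·Σ_k γ_k·Γ_k*ρ*Γ_kᴴ) is Hermitian; equivalently i·ħ·W'*Wᴴ = H*ρ − (i/2)·Σ_k γ_k·Γ_kᴴ*Γ_k*ρ + (i/2)·Σ_k γ_k·Γ_k*ρ*Γ_kᴴ + K with K self-adjoint, which is the purified projected nonlinear Schrödinger equation. -/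
open Matrix Complex BigOperators

/-- If `W` is a differentiable purification (with derivative `W'`) of a solution
`ρ = W Wᴴ` of the Lindblad equation, then
`K = ihbar W' Wᴴ - (Hρ - (i/2)Σγ ΓᴴΓρ + (i/2)Σγ ΓρΓᴴ)` is Hermitian. -/
theorem purified_schrodinger_correction_isHermitian
    {n K : Type*} [Fintype n] [DecidableEq n] [Fintype K]
    (H : Matrix n n ℂ) (hH : H.IsHermitian)
    (Γ : K → Matrix n n ℂ) (γ : K → ℝ) (hbar : ℝ)
    (W W' : Matrix n n ℂ)
    (hLind : ((hbar : ℂ) * Complex.I) • (W' * Wᴴ + W * (W')ᴴ)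
      = (H * (W * Wᴴ) - (W * Wᴴ) * H)
        - (Complex.I / 2) • ∑ k, (γ k : ℂ) •
            ((Γ k)ᴴ * Γ k * (W * Wᴴ) + (W * Wᴴ) * ((Γ k)ᴴ * Γ k))
        + Complex.I • ∑ k, (γ k : ℂ) • (Γ k * (W * Wᴴ) * (Γ k)ᴴ)) :
    (((hbar : ℂ) * Complex.I) • (W' * Wᴴ)
      - (H * (W * Wᴴ)
          - (Complex.I / 2) • ∑ k, (γ k : ℂ) • ((Γ k)ᴴ * Γ k * (W * Wᴴ))
          + (Complex.I / 2) • ∑ k, (γ k : ℂ) • (Γ k * (W * Wᴴ) * (Γ k)ᴴ))).IsHermitian := by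
  rw [Matrix.IsHermitian, ← sub_eq_zero]
  have h := sub_eq_zero_of_eq hLind.symm
  simp only [conjTranspose_sub, conjTranspose_add, conjTranspose_smul, conjTranspose_mul,
    Matrix.conjTranspose_sum, conjTranspose_conjTranspose, hH.eq, star_mul',
    Complex.star_def, _root_.map_mul, Complex.conj_I, Complex.conj_ofReal, map_div₀, map_ofNat,
    ← mul_assoc, smul_add, Finset.sum_add_distrib] at *
  rw [← h]
  module
end

section
/- Let H be a Hermitian n×n complex matrix, (Γ_k) a finite family of n×n complex matrices, (γ_k) real numbers, and ħ a real number. Let W be an invertible n×n complex matrix and let W' satisfy the nonlinear Schrödinger equation of the purified dynamics i·ħ·W' = H_eff*W + (i/2)·Σ_k γ_k·Γ_k*W*Wᴴ*Γ_kᴴ*(Wᴴ)⁻¹. Then ρ = W*Wᴴ satisfies the Lindblad equation: i·ħ·(W'*Wᴴ + W*(W')ᴴ) = L(ρ). -/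
open Matrix Complex BigOperators

/-- On a regular stratum (`W` invertible), if `W` satisfies the nonlinear
Schrödinger equation of the purified dynamics, then `ρ = W Wᴴ` satisfies the
Lindblad equation. -/
theorem density_of_nlse_satisfies_lindblad
    {n K : Type*} [Fintype n] [DecidableEq n] [Fintype K]
    (H : Matrix n n ℂ) (hH : H.IsHermitian)
    (Γ : K → Matrix n n ℂ) (γ : K → ℝ) (hbar : ℝ)
    (W W' : Matrix n n ℂ) (hW : IsUnit W)
    (hNLSE : ((hbar : ℂ) * Complex.I) • W'
      = (H - (Complex.I / 2) • ∑ k, (γ k : ℂ) • ((Γ k)ᴴ * Γ k)) * W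
        + (Complex.I / 2) • ∑ k, (γ k : ℂ) • (Γ k * W * Wᴴ * (Γ k)ᴴ * (Wᴴ)⁻¹)) :
    ((hbar : ℂ) * Complex.I) • (W' * Wᴴ + W * (W')ᴴ)
      = (H * (W * Wᴴ) - (W * Wᴴ) * H)
        - (Complex.I / 2) • ∑ k, (γ k : ℂ) •
            ((Γ k)ᴴ * Γ k * (W * Wᴴ) + (W * Wᴴ) * ((Γ k)ᴴ * Γ k))
        + Complex.I • ∑ k, (γ k : ℂ) • (Γ k * (W * Wᴴ) * (Γ k)ᴴ) := by
  set c : ℂ := (hbar : ℂ) * Complex.I with hc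
  have hdetW : IsUnit W.det := (Matrix.isUnit_iff_isUnit_det W).mp hW
  have hdetWH : IsUnit (Wᴴ).det := by
    rw [Matrix.det_conjTranspose]; exact hdetW.star
  have h1 : (Wᴴ)⁻¹ * Wᴴ = 1 := Matrix.nonsing_inv_mul _ hdetWH
  have h2 : W * W⁻¹ = 1 := Matrix.mul_nonsing_inv _ hdetW
  have hstarc : star c = -c := by
    simp [hc, Complex.ext_iff]
  have key : c • (W' * Wᴴ + W * (W')ᴴ) = (c • W') * Wᴴ - W * (c • W')ᴴ := by
    rw [Matrix.conjTranspose_smul, hstarc]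
    simp [smul_add, Matrix.smul_mul, Matrix.mul_smul, sub_eq_add_neg]
  rw [key, hNLSE]
  -- sum lemmas
  have hs1 : (Complex.I / 2) • (∑ k, (γ k : ℂ) • (Γ k * W * Wᴴ * (Γ k)ᴴ * (Wᴴ)⁻¹)) * Wᴴ
      = (Complex.I / 2) • ∑ k, (γ k : ℂ) • (Γ k * (W * Wᴴ) * (Γ k)ᴴ) := by
    rw [Matrix.smul_mul, Finset.sum_mul]
    congr 1
    refine Finset.sum_congr rfl fun k _ => ?_
    rw [Matrix.smul_mul]
    congr 1
    rw [Matrix.mul_assoc _ (Wᴴ)⁻¹ Wᴴ, h1, Matrix.mul_one, Matrix.mul_assoc (Γ k)]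
  have hs2 : W * ((Complex.I / 2) • ∑ k, (γ k : ℂ) • (Γ k * W * Wᴴ * (Γ k)ᴴ * (Wᴴ)⁻¹))ᴴ
      = (-(Complex.I / 2)) • ∑ k, (γ k : ℂ) • (Γ k * (W * Wᴴ) * (Γ k)ᴴ) := by
    rw [Matrix.conjTranspose_smul]
    have : star (Complex.I / 2) = -(Complex.I/2) := by
      rw [star_div₀, Complex.star_def, Complex.conj_I, map_ofNat]
      ring
    rw [this, Matrix.conjTranspose_sum]
    rw [Matrix.mul_smul, neg_smul, neg_smul, neg_inj]
    rw [Matrix.mul_sum]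
    congr 1
    refine Finset.sum_congr rfl fun k _ => ?_
    rw [Matrix.conjTranspose_smul]
    rw [show star ((γ k : ℂ)) = (γ k : ℂ) from Complex.conj_ofReal _, Matrix.mul_smul]
    congr 1
    simp only [Matrix.conjTranspose_mul, Matrix.conjTranspose_conjTranspose,
      Matrix.conjTranspose_nonsing_inv]
    rw [← Matrix.mul_assoc, ← Matrix.mul_assoc, ← Matrix.mul_assoc, ← Matrix.mul_assoc, h2,
      Matrix.one_mul, Matrix.mul_assoc (Γ k)]
  have hS : (∑ k, (γ k : ℂ) • ((Γ k)ᴴ * Γ k))ᴴ = ∑ k, (γ k : ℂ) • ((Γ k)ᴴ * Γ k) := by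
    rw [Matrix.conjTranspose_sum]
    refine Finset.sum_congr rfl fun k _ => ?_
    rw [Matrix.conjTranspose_smul,
      show star ((γ k : ℂ)) = (γ k : ℂ) from Complex.conj_ofReal _, Matrix.conjTranspose_mul,
      Matrix.conjTranspose_conjTranspose]
  rw [Matrix.add_mul, hs1, Matrix.conjTranspose_add, Matrix.mul_add, hs2,
    Matrix.conjTranspose_mul, Matrix.conjTranspose_sub, hH.eq, Matrix.conjTranspose_smul, hS]
  have hstarhalf : star (Complex.I/2) = -(Complex.I/2) := by
    rw [star_div₀, Complex.star_def, Complex.conj_I, map_ofNat]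
    ring
  rw [hstarhalf]
  set S := ∑ k, (γ k : ℂ) • ((Γ k)ᴴ * Γ k) with hSdef
  set T := ∑ k, (γ k : ℂ) • (Γ k * (W * Wᴴ) * (Γ k)ᴴ) with hTdef
  have hSmul : (Complex.I / 2) • (S * (W * Wᴴ)) + (Complex.I / 2) • ((W * Wᴴ) * S)
      = (Complex.I / 2) • ∑ k, (γ k : ℂ) •
        ((Γ k)ᴴ * Γ k * (W * Wᴴ) + (W * Wᴴ) * ((Γ k)ᴴ * Γ k)) := by
    rw [← smul_add]
    congr 1
    simp only [hSdef, Finset.sum_mul, Finset.mul_sum, Matrix.smul_mul, Matrix.mul_smul,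
      ← Finset.sum_add_distrib, smul_add]
  rw [← hSmul, Matrix.sub_mul, Matrix.sub_mul, ← Matrix.mul_assoc W Wᴴ,
    Matrix.mul_sub (W * Wᴴ), Matrix.mul_smul, Matrix.smul_mul, Matrix.smul_mul,
    Matrix.mul_assoc H, Matrix.mul_assoc S, neg_smul, neg_smul]
  module
end

section
/- Let H be a Hermitian n×n complex matrix, (Γ_k) a finite family of n×n complex matrices, (γ_k) real numbers, and ħ a real number. Let W be an n×n complex matrix admitting a Moore–Penrose pseudoinverse W⁺, and set P = W*W⁺ and ρ = W*Wᴴ. If W' satisfies the nonlinear Schrödinger equation i·ħ·W' = H_eff*W + (i/2)·Σ_k γ_k·Γ_k*W*Wᴴ*Γ_kᴴ*(W⁺)ᴴ, then ρ solves the projected master equation: i·ħ·(W'*Wᴴ + W*(W')ᴴ) = (H*ρ − ρ*H) − (i/2)·Σ_k γ_k·(Γ_kᴴ*Γ_k*ρ + ρ*Γ_kᴴ*Γ_k) + (i/2)·Σ_k γ_k·(Γ_k*ρ*Γ_kᴴ*P + P*Γ_k*ρ*Γ_kᴴ). -/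
open Matrix Complex BigOperators

/-- If `W` has Moore–Penrose pseudoinverse `Wp`, `P = W * Wp`, `ρ = W Wᴴ`, and
`W'` satisfies the projected nonlinear Schrödinger equation, then `ρ` solves
the projected master equation. -/
theorem density_of_nlse_satisfies_projected_master_equation
    {n K : Type*} [Fintype n] [DecidableEq n] [Fintype K]
    (H : Matrix n n ℂ) (hH : H.IsHermitian)
    (Γ : K → Matrix n n ℂ) (γ : K → ℝ) (hbar : ℝ)
    (W Wp W' : Matrix n n ℂ)
    (hp1 : W * Wp * W = W) (hp2 : Wp * W * Wp = Wp)
    (hp3 : (W * Wp)ᴴ = W * Wp) (hp4 : (Wp * W)ᴴ = Wp * W)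
    (hNLSE : ((hbar : ℂ) * Complex.I) • W'
      = (H - (Complex.I / 2) • ∑ k, (γ k : ℂ) • ((Γ k)ᴴ * Γ k)) * W
        + (Complex.I / 2) • ∑ k, (γ k : ℂ) • (Γ k * W * Wᴴ * (Γ k)ᴴ * Wpᴴ)) :
    ((hbar : ℂ) * Complex.I) • (W' * Wᴴ + W * (W')ᴴ)
      = (H * (W * Wᴴ) - (W * Wᴴ) * H)
        - (Complex.I / 2) • ∑ k, (γ k : ℂ) •
            ((Γ k)ᴴ * Γ k * (W * Wᴴ) + (W * Wᴴ) * ((Γ k)ᴴ * Γ k))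
        + (Complex.I / 2) • ∑ k, (γ k : ℂ) •
            (Γ k * (W * Wᴴ) * (Γ k)ᴴ * (W * Wp) + (W * Wp) * (Γ k * (W * Wᴴ) * (Γ k)ᴴ)) := by
  set A := ∑ k, (γ k : ℂ) • ((Γ k)ᴴ * Γ k) with hAdef
  set B := ∑ k, (γ k : ℂ) • (Γ k * W * Wᴴ * (Γ k)ᴴ * Wpᴴ) with hBdef
  have key : Wpᴴ * Wᴴ = W * Wp := by rw [← conjTranspose_mul, hp3]
  have hA : Aᴴ = A := by
    simp [hAdef, conjTranspose_sum, conjTranspose_smul, Complex.star_def,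
      Complex.conj_ofReal, conjTranspose_mul]
  have hS1 : (∑ k, (γ k : ℂ) •
      ((Γ k)ᴴ * Γ k * (W * Wᴴ) + (W * Wᴴ) * ((Γ k)ᴴ * Γ k)))
      = A * (W * Wᴴ) + (W * Wᴴ) * A := by
    simp [hAdef, Finset.sum_mul, Finset.mul_sum, smul_add, Finset.sum_add_distrib,
      smul_mul_assoc, mul_smul_comm, mul_assoc]
  have hBW : B * Wᴴ = ∑ k, (γ k : ℂ) • (Γ k * (W * Wᴴ) * (Γ k)ᴴ * (W * Wp)) := by
    rw [hBdef, Finset.sum_mul]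
    refine Finset.sum_congr rfl fun k _ => ?_
    rw [smul_mul_assoc]
    simp only [mul_assoc, key]
  have hWB : W * Bᴴ = ∑ k, (γ k : ℂ) • ((W * Wp) * (Γ k * (W * Wᴴ) * (Γ k)ᴴ)) := by
    rw [hBdef, conjTranspose_sum, Finset.mul_sum]
    refine Finset.sum_congr rfl fun k _ => ?_
    simp only [conjTranspose_smul, Complex.star_def, Complex.conj_ofReal,
      conjTranspose_mul, conjTranspose_conjTranspose, mul_smul_comm, mul_assoc]
  have hS3 : (∑ k, (γ k : ℂ) •
      (Γ k * (W * Wᴴ) * (Γ k)ᴴ * (W * Wp) + (W * Wp) * (Γ k * (W * Wᴴ) * (Γ k)ᴴ)))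
      = B * Wᴴ + W * Bᴴ := by
    rw [hBW, hWB, ← Finset.sum_add_distrib]
    exact Finset.sum_congr rfl fun k _ => smul_add _ _ _
  have h1 : ((hbar : ℂ) * Complex.I) • (W' * Wᴴ)
      = ((H - (Complex.I / 2) • A) * W + (Complex.I / 2) • B) * Wᴴ := by
    rw [← smul_mul_assoc, hNLSE]
  have h2 : ((hbar : ℂ) * Complex.I) • (W * (W')ᴴ)
      = -(W * ((H - (Complex.I / 2) • A) * W + (Complex.I / 2) • B)ᴴ) := by
    have h := congrArg (fun M => W * Mᴴ) hNLSE
    simp only [conjTranspose_smul, Complex.star_def, _root_.map_mul, Complex.conj_I,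
      Complex.conj_ofReal, mul_smul_comm, mul_neg, neg_smul] at h
    rw [← h, neg_neg]
  rw [smul_add, h1, h2, hS1, hS3]
  simp only [conjTranspose_add, conjTranspose_sub, conjTranspose_mul, conjTranspose_smul,
    hA, hH.eq, Complex.star_def, map_div₀, Complex.conj_I, map_ofNat,
    sub_mul, add_mul, mul_add, mul_sub, smul_mul_assoc, mul_smul_comm, mul_assoc]
  module
end

section
/- Let H be a Hermitian n×n complex matrix, (Γ_k) a finite family of n×n complex matrices and (γ_k) real numbers. Let g be an invertible n×n complex matrix which commutes with H_eff and with every Γ_k (g*H_eff = H_eff*g and g*Γ_k = Γ_k*g for all k). Then for every invertible n×n complex matrix W, the nonlinear purified generator is equivariant: F(g*W) = g*F(W), where F(W) = H_eff*W + (i/2)·Σ_k γ_k·Γ_k*W*Wᴴ*Γ_kᴴ*(Wᴴ)⁻¹. (Thus g is a phase with respect to the generator of the dynamics.) -/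
open Matrix Complex BigOperators

/-- If an invertible `g` commutes with `H_eff` and with every jump operator
`Γ_k`, then the nonlinear purified generator `F` is equivariant:
`F(g W) = g F(W)`, i.e. `g` is a phase with respect to the generator of the
dynamics. -/
theorem nonlinear_generator_equivariant_of_commuting
    {n K : Type*} [Fintype n] [DecidableEq n] [Fintype K]
    (H : Matrix n n ℂ) (hH : H.IsHermitian)
    (Γ : K → Matrix n n ℂ) (γ : K → ℝ)
    (g : Matrix n n ℂ) (hg : IsUnit g)
    (hgH : g * (H - (Complex.I / 2) • ∑ k, (γ k : ℂ) • ((Γ k)ᴴ * Γ k))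
         = (H - (Complex.I / 2) • ∑ k, (γ k : ℂ) • ((Γ k)ᴴ * Γ k)) * g)
    (hgΓ : ∀ k, g * Γ k = Γ k * g) :
    ∀ W : Matrix n n ℂ, IsUnit W →
      (H - (Complex.I / 2) • ∑ k, (γ k : ℂ) • ((Γ k)ᴴ * Γ k)) * (g * W)
        + (Complex.I / 2) • ∑ k, (γ k : ℂ) •
            (Γ k * (g * W) * ((g * W)ᴴ) * (Γ k)ᴴ * (((g * W)ᴴ)⁻¹))
      = g * ((H - (Complex.I / 2) • ∑ k, (γ k : ℂ) • ((Γ k)ᴴ * Γ k)) * W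
        + (Complex.I / 2) • ∑ k, (γ k : ℂ) •
            (Γ k * W * Wᴴ * (Γ k)ᴴ * (Wᴴ)⁻¹)) := by
  intro W hW
  have hdet : IsUnit (gᴴ).det := by
    rw [Matrix.det_conjTranspose]
    exact ((Matrix.isUnit_iff_isUnit_det g).mp hg).star
  have h2 : gᴴ * (gᴴ)⁻¹ = 1 := Matrix.mul_nonsing_inv _ hdet
  have key : ∀ k, Γ k * (g * W) * (g * W)ᴴ * (Γ k)ᴴ * ((g * W)ᴴ)⁻¹
      = g * (Γ k * W * Wᴴ * (Γ k)ᴴ * (Wᴴ)⁻¹) := fun k => by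
    have h1 : gᴴ * (Γ k)ᴴ = (Γ k)ᴴ * gᴴ := by
      rw [← conjTranspose_mul, ← conjTranspose_mul, hgΓ]
    calc Γ k * (g * W) * (g * W)ᴴ * (Γ k)ᴴ * ((g * W)ᴴ)⁻¹
        = Γ k * (g * (W * (Wᴴ * (gᴴ * ((Γ k)ᴴ * ((gᴴ)⁻¹ * (Wᴴ)⁻¹)))))) := by
          rw [conjTranspose_mul, Matrix.mul_inv_rev]
          simp only [mul_assoc]
      _ = Γ k * (g * (W * (Wᴴ * ((Γ k)ᴴ * (gᴴ * ((gᴴ)⁻¹ * (Wᴴ)⁻¹)))))) := by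
          simp only [← mul_assoc, h1]
      _ = Γ k * (g * (W * (Wᴴ * ((Γ k)ᴴ * (Wᴴ)⁻¹)))) := by
          rw [← mul_assoc gᴴ, h2, one_mul]
      _ = g * (Γ k * W * Wᴴ * (Γ k)ᴴ * (Wᴴ)⁻¹) := by
          rw [← mul_assoc, ← hgΓ]
          simp only [mul_assoc]
  rw [mul_add]
  congr 1
  · rw [← mul_assoc, ← hgH, mul_assoc]
  · simp only [Finset.smul_sum, Finset.mul_sum, mul_smul_comm, key]
end

section
/- Let H be a Hermitian n×n complex matrix, (Γ_k) a finite family of n×n complex matrices and (γ_k) real numbers. Let k be a unitary n×n complex matrix (k*kᴴ = 1) and W an invertible n×n complex matrix. Then the nonlinear purified generator commutes with the right unitary action of the ancilla reconfigurations: F(W*k) = F(W)*k, where F(W) = H_eff*W + (i/2)·Σ_k γ_k·Γ_k*W*Wᴴ*Γ_kᴴ*(Wᴴ)⁻¹. -/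
open Matrix Complex BigOperators

/-- The nonlinear purified generator commutes with the right unitary action of
ancilla reconfigurations: `F(W k) = F(W) k` for unitary `k`. -/
theorem nonlinear_generator_right_unitary_equivariant
    {n K : Type*} [Fintype n] [DecidableEq n] [Fintype K]
    (H : Matrix n n ℂ) (hH : H.IsHermitian)
    (Γ : K → Matrix n n ℂ) (γ : K → ℝ)
    (k : Matrix n n ℂ) (hk : k * kᴴ = 1)
    (W : Matrix n n ℂ) (hW : IsUnit W) :
    (H - (Complex.I / 2) • ∑ j, (γ j : ℂ) • ((Γ j)ᴴ * Γ j)) * (W * k)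
      + (Complex.I / 2) • ∑ j, (γ j : ℂ) •
          (Γ j * (W * k) * ((W * k)ᴴ) * (Γ j)ᴴ * (((W * k)ᴴ)⁻¹))
    = ((H - (Complex.I / 2) • ∑ j, (γ j : ℂ) • ((Γ j)ᴴ * Γ j)) * W
      + (Complex.I / 2) • ∑ j, (γ j : ℂ) •
          (Γ j * W * Wᴴ * (Γ j)ᴴ * (Wᴴ)⁻¹)) * k := by
  have hk' : kᴴ * k = 1 := mul_eq_one_comm.mp hk
  have hkinv : (kᴴ)⁻¹ = k := Matrix.inv_eq_right_inv hk'
  have hinv : ((W * k)ᴴ)⁻¹ = (Wᴴ)⁻¹ * k := by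
    rw [conjTranspose_mul, Matrix.mul_inv_rev, hkinv]
  have hterm : ∀ j, Γ j * (W * k) * ((W * k)ᴴ) * (Γ j)ᴴ * (((W * k)ᴴ)⁻¹)
      = (Γ j * W * Wᴴ * (Γ j)ᴴ * (Wᴴ)⁻¹) * k := by
    intro j
    rw [hinv, conjTranspose_mul]
    have : Γ j * (W * k) * (kᴴ * Wᴴ) = Γ j * W * Wᴴ := by
      rw [show Γ j * (W * k) * (kᴴ * Wᴴ) = Γ j * W * (k * kᴴ) * Wᴴ by
        simp only [Matrix.mul_assoc], hk, Matrix.mul_one]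
    rw [this, Matrix.mul_assoc (Γ j * W * Wᴴ * (Γ j)ᴴ)]
  rw [add_mul, Matrix.mul_assoc, Matrix.smul_mul, Finset.sum_mul]
  congr 1
  rw [Finset.smul_sum, Finset.smul_sum]
  refine Finset.sum_congr rfl fun j _ => ?_
  rw [hterm j, Matrix.smul_mul]
end

section
/- Let H be a Hermitian n×n complex matrix, (Γ_j) a finite family of n×n complex matrices, (γ_j) real numbers, and ħ a nonzero real number. Let g and W̃ be invertible n×n complex matrices, k a unitary n×n complex matrix, and let g', W̃', k' be arbitrary matrices (the time derivatives). Set W = g*W̃*k and W' = g'*W̃*k + g*W̃'*k + g*W̃*k'. Set ρ = g*W̃*W̃ᴴ*gᴴ and E(ρ) = H_eff + (i/2)·Σ_j γ_j·Γ_j*ρ*Γ_jᴴ*ρ⁻¹. If the nonlinear Schrödinger equation i·ħ·W' = H_eff*W + (i/2)·Σ_j γ_j·Γ_j*W*Wᴴ*Γ_jᴴ*(Wᴴ)⁻¹ holds, then g⁻¹*g' + W̃*k'*k⁻¹*W̃⁻¹ = −W̃'*W̃⁻¹ − (i/ħ)·g⁻¹*E(ρ)*g. (This is the differential equation characterizing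 the decomposition of the operator-valued phase g into dynamical phase, first-kind and second-kind geometric phase generators, on a regular stratum.) -/
open Matrix Complex BigOperators

/-- Decomposition of the operator-valued phase into dynamical phase and
geometric phase generators (first and second kind) on a regular stratum:
if `W = g W̃ k` satisfies the nonlinear Schrödinger equation of the purified
dynamics, then `g⁻¹ g' + W̃ k' k⁻¹ W̃⁻¹ = - W̃' W̃⁻¹ - (i/hbar) g⁻¹ E(ρ) g`. -/
theorem phase_decomposition_ode
    {n K : Type*} [Fintype n] [DecidableEq n] [Fintype K]
    (H : Matrix n n ℂ) (hH : H.IsHermitian)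
    (Γ : K → Matrix n n ℂ) (γ : K → ℝ) (hbar : ℝ) (hhbar : hbar ≠ 0)
    (g Wt : Matrix n n ℂ) (hg : IsUnit g) (hWt : IsUnit Wt)
    (k : Matrix n n ℂ) (hk : k * kᴴ = 1)
    (g' Wt' k' : Matrix n n ℂ)
    (hNLSE : ((hbar : ℂ) * Complex.I) •
        (g' * Wt * k + g * Wt' * k + g * Wt * k')
      = (H - (Complex.I / 2) • ∑ j, (γ j : ℂ) • ((Γ j)ᴴ * Γ j)) * (g * Wt * k)
        + (Complex.I / 2) • ∑ j, (γ j : ℂ) •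
            (Γ j * (g * Wt * k) * ((g * Wt * k)ᴴ) * (Γ j)ᴴ * (((g * Wt * k)ᴴ)⁻¹))) :
    g⁻¹ * g' + Wt * k' * k⁻¹ * Wt⁻¹
      = - (Wt' * Wt⁻¹)
        - (Complex.I / (hbar : ℂ)) •
          (g⁻¹ *
            ((H - (Complex.I / 2) • ∑ j, (γ j : ℂ) • ((Γ j)ᴴ * Γ j))
              + (Complex.I / 2) • ∑ j, (γ j : ℂ) •
                  (Γ j * (g * Wt * Wtᴴ * gᴴ) * (Γ j)ᴴ * (g * Wt * Wtᴴ * gᴴ)⁻¹))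
            * g) := by

  have hkd : IsUnit k.det := Matrix.isUnit_det_of_right_inverse hk
  have hkU : IsUnit k := (Matrix.isUnit_iff_isUnit_det k).mpr hkd
  have hgd : IsUnit g.det := (Matrix.isUnit_iff_isUnit_det g).mp hg
  have hWtd : IsUnit Wt.det := (Matrix.isUnit_iff_isUnit_det Wt).mp hWt
  have hgHU : IsUnit gᴴ := (Matrix.isUnit_conjTranspose g).mpr hg
  have hWtHU : IsUnit Wtᴴ := (Matrix.isUnit_conjTranspose Wt).mpr hWt
  have hWU : IsUnit (g * Wt * k) := (hg.mul hWt).mul hkU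
  have hWd : IsUnit (g * Wt * k).det := (Matrix.isUnit_iff_isUnit_det _).mp hWU
  have hρU : IsUnit (g * Wt * Wtᴴ * gᴴ) := ((hg.mul hWt).mul hWtHU).mul hgHU
  have hρd : IsUnit (g * Wt * Wtᴴ * gᴴ).det := (Matrix.isUnit_iff_isUnit_det _).mp hρU
  have hkinv : k * k⁻¹ = 1 := Matrix.mul_nonsing_inv _ hkd
  have hWWH : g * Wt * k * (g * Wt * k)ᴴ = g * Wt * Wtᴴ * gᴴ := by
    simp only [conjTranspose_mul, Matrix.mul_assoc]
    rw [← Matrix.mul_assoc k kᴴ, hk, Matrix.one_mul]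
  have hWH : (g * Wt * k)ᴴ = (g * Wt * k)⁻¹ * (g * Wt * Wtᴴ * gᴴ) := by
    rw [← hWWH, ← Matrix.mul_assoc, Matrix.nonsing_inv_mul _ hWd, Matrix.one_mul]
  have hWHinv : ((g * Wt * k)ᴴ)⁻¹ = (g * Wt * Wtᴴ * gᴴ)⁻¹ * (g * Wt * k) := by
    rw [hWH, Matrix.mul_inv_rev, Matrix.nonsing_inv_nonsing_inv _ hWd]
  have hterm : ∀ j, Γ j * (g * Wt * k) * (g * Wt * k)ᴴ * (Γ j)ᴴ * (((g * Wt * k)ᴴ)⁻¹)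
      = (Γ j * (g * Wt * Wtᴴ * gᴴ) * (Γ j)ᴴ * (g * Wt * Wtᴴ * gᴴ)⁻¹) * (g * Wt * k) := by
    intro j
    rw [Matrix.mul_assoc (Γ j) (g * Wt * k) ((g * Wt * k)ᴴ), hWWH, hWHinv,
      ← Matrix.mul_assoc, ← Matrix.mul_assoc]
  simp only [hterm, ← smul_mul_assoc] at hNLSE
  rw [← Finset.sum_mul, ← smul_mul_assoc, ← Matrix.add_mul] at hNLSE
  set E : Matrix n n ℂ :=
    (H - (Complex.I / 2) • ∑ j, (γ j : ℂ) • ((Γ j)ᴴ * Γ j))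
      + (Complex.I / 2) • ∑ j, (γ j : ℂ) •
          (Γ j * (g * Wt * Wtᴴ * gᴴ) * (Γ j)ᴴ * (g * Wt * Wtᴴ * gᴴ)⁻¹) with hE
  have key := congrArg (fun X => g⁻¹ * X * k⁻¹ * Wt⁻¹) hNLSE
  simp only [Matrix.mul_smul, Matrix.smul_mul, Matrix.mul_add, Matrix.add_mul] at key
  have e1 : g⁻¹ * (g' * Wt * k) * k⁻¹ * Wt⁻¹ = g⁻¹ * g' := by
    simp [Matrix.mul_assoc, Matrix.mul_nonsing_inv_cancel_left _ _ hkd,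
      Matrix.mul_nonsing_inv_cancel_left _ _ hWtd, Matrix.mul_nonsing_inv _ hWtd]
  have e2 : g⁻¹ * (g * Wt' * k) * k⁻¹ * Wt⁻¹ = Wt' * Wt⁻¹ := by
    simp [Matrix.mul_assoc, Matrix.mul_nonsing_inv_cancel_left _ _ hkd,
      Matrix.nonsing_inv_mul_cancel_left _ _ hgd]
  have e3 : g⁻¹ * (g * Wt * k') * k⁻¹ * Wt⁻¹ = Wt * k' * k⁻¹ * Wt⁻¹ := by
    simp [Matrix.mul_assoc, Matrix.nonsing_inv_mul_cancel_left _ _ hgd]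
  have e4 : ∀ M : Matrix n n ℂ, g⁻¹ * (M * (g * Wt * k)) * k⁻¹ * Wt⁻¹ = g⁻¹ * M * g := by
    intro M
    simp [Matrix.mul_assoc, Matrix.mul_nonsing_inv_cancel_left _ _ hkd,
      Matrix.mul_nonsing_inv_cancel_left _ _ hWtd, Matrix.mul_nonsing_inv _ hWtd]
  simp only [e1, e2, e3, e4] at key
  have key2 : ((hbar : ℂ) * Complex.I) •
      (g⁻¹ * g' + Wt' * Wt⁻¹ + Wt * k' * k⁻¹ * Wt⁻¹) = g⁻¹ * E * g := by
    rw [key, hE]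
    simp only [Matrix.add_mul, Matrix.mul_add, Matrix.smul_mul, Matrix.mul_smul,
      Matrix.mul_assoc]
  have hc : ((hbar : ℂ) * Complex.I) ≠ 0 :=
    mul_ne_zero (by exact_mod_cast hhbar) Complex.I_ne_zero
  have h2 : g⁻¹ * g' + Wt' * Wt⁻¹ + Wt * k' * k⁻¹ * Wt⁻¹
      = ((hbar : ℂ) * Complex.I)⁻¹ • (g⁻¹ * E * g) := by
    rw [← key2, smul_smul, inv_mul_cancel₀ hc, one_smul]
  have hscal : -(Complex.I / (hbar : ℂ)) = ((hbar : ℂ) * Complex.I)⁻¹ := by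
    rw [mul_inv, Complex.inv_I]
    field_simp
  have h3 : g⁻¹ * g' + Wt * k' * k⁻¹ * Wt⁻¹
      = ((hbar : ℂ) * Complex.I)⁻¹ • (g⁻¹ * E * g) - Wt' * Wt⁻¹ := by
    rw [← h2]; abel
  rw [h3, ← hscal, neg_smul]
  abel
end

section
/- Let W̃ be an invertible n×n complex matrix and set ρ̃ = W̃*W̃ᴴ. Let k be a unitary n×n complex matrix (k*kᴴ = 1) and k' a matrix tangent to the unitary group at k, i.e. k'*kᴴ + k*(k')ᴴ = 0. Then the geometric phase generator of the second kind η = W̃*k'*k⁻¹*W̃⁻¹ lies in the stabilizer Lie algebra of ρ̃: η*ρ̃ + ρ̃*ηᴴ = 0. -/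
open Matrix Complex

/-- The geometric phase generator of the second kind `η = W̃ k' k⁻¹ W̃⁻¹` lies
in the stabilizer Lie algebra of `ρ̃ = W̃ W̃ᴴ`. -/
theorem second_kind_generator_mem_stabilizer_lie_algebra
    {n : Type*} [Fintype n] [DecidableEq n]
    (Wt : Matrix n n ℂ) (hWt : IsUnit Wt)
    (k k' : Matrix n n ℂ) (hk : k * kᴴ = 1)
    (hk' : k' * kᴴ + k * (k')ᴴ = 0) :
    (Wt * k' * k⁻¹ * Wt⁻¹) * (Wt * Wtᴴ)
      + (Wt * Wtᴴ) * (Wt * k' * k⁻¹ * Wt⁻¹)ᴴ = 0 := by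
  have hdet : IsUnit Wt.det := (Matrix.isUnit_iff_isUnit_det Wt).mp hWt
  have hkinv : k⁻¹ = kᴴ := Matrix.inv_eq_right_inv hk
  have h1 : Wt⁻¹ * Wt = 1 := Matrix.nonsing_inv_mul Wt hdet
  have h2 : Wtᴴ * (Wt⁻¹)ᴴ = 1 := by
    rw [← Matrix.conjTranspose_mul, h1, Matrix.conjTranspose_one]
  calc (Wt * k' * k⁻¹ * Wt⁻¹) * (Wt * Wtᴴ)
      + (Wt * Wtᴴ) * (Wt * k' * k⁻¹ * Wt⁻¹)ᴴ
      = Wt * k' * kᴴ * (Wt⁻¹ * Wt) * Wtᴴ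
        + Wt * (Wtᴴ * (Wt⁻¹)ᴴ) * (kᴴ)ᴴ * (k')ᴴ * Wtᴴ := by
        rw [hkinv]; simp only [Matrix.conjTranspose_mul]; noncomm_ring
    _ = Wt * (k' * kᴴ + k * (k')ᴴ) * Wtᴴ := by
        rw [h1, h2, Matrix.conjTranspose_conjTranspose]; noncomm_ring
    _ = 0 := by rw [hk']; simp
end

section
/- Let H be a Hermitian n×n complex matrix, (Γ_k) a finite family of n×n complex matrices and (γ_k) real numbers. Let g be an invertible n×n complex matrix commuting with H_eff and with every Γ_k (g*H_eff = H_eff*g and g*Γ_k = Γ_k*g for all k), and let ρ be an invertible n×n complex matrix. Then the dynamical phase generator is equivariant: E(g*ρ*gᴴ) = g*E(ρ)*g⁻¹, where E(ρ) = H_eff + (i/2)·Σ_k γ_k·Γ_k*ρ*Γ_kᴴ*ρ⁻¹. -/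
open Matrix Complex BigOperators

/-- If an invertible `g` commutes with `H_eff` and with every `Γ_k`, then the
dynamical phase generator is equivariant: `E(g ρ gᴴ) = g E(ρ) g⁻¹`. -/
theorem dynamical_phase_generator_equivariant
    {n K : Type*} [Fintype n] [DecidableEq n] [Fintype K]
    (H : Matrix n n ℂ) (hH : H.IsHermitian)
    (Γ : K → Matrix n n ℂ) (γ : K → ℝ)
    (g : Matrix n n ℂ) (hg : IsUnit g)
    (hgH : g * (H - (Complex.I / 2) • ∑ k, (γ k : ℂ) • ((Γ k)ᴴ * Γ k))
         = (H - (Complex.I / 2) • ∑ k, (γ k : ℂ) • ((Γ k)ᴴ * Γ k)) * g)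
    (hgΓ : ∀ k, g * Γ k = Γ k * g)
    (ρ : Matrix n n ℂ) (hρ : IsUnit ρ) :
    (H - (Complex.I / 2) • ∑ k, (γ k : ℂ) • ((Γ k)ᴴ * Γ k))
      + (Complex.I / 2) • ∑ k, (γ k : ℂ) •
          (Γ k * (g * ρ * gᴴ) * (Γ k)ᴴ * (g * ρ * gᴴ)⁻¹)
    = g * ((H - (Complex.I / 2) • ∑ k, (γ k : ℂ) • ((Γ k)ᴴ * Γ k))
        + (Complex.I / 2) • ∑ k, (γ k : ℂ) •
            (Γ k * ρ * (Γ k)ᴴ * ρ⁻¹)) * g⁻¹ := by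
  set Heff := H - (Complex.I / 2) • ∑ k, (γ k : ℂ) • ((Γ k)ᴴ * Γ k) with hHeff
  have hginv : g * g⁻¹ = 1 := Matrix.mul_nonsing_inv g ((Matrix.isUnit_iff_isUnit_det g).mp hg)
  have hgHunit : IsUnit gᴴ := (Matrix.isUnit_conjTranspose g).mpr hg
  have hgHinv : gᴴ * (gᴴ)⁻¹ = 1 :=
    Matrix.mul_nonsing_inv gᴴ ((Matrix.isUnit_iff_isUnit_det gᴴ).mp hgHunit)
  have hrev : (g * ρ * gᴴ)⁻¹ = (gᴴ)⁻¹ * ρ⁻¹ * g⁻¹ := by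
    rw [Matrix.mul_inv_rev, Matrix.mul_inv_rev]; noncomm_ring
  have hterm : ∀ k, Γ k * (g * ρ * gᴴ) * (Γ k)ᴴ * (g * ρ * gᴴ)⁻¹
      = g * (Γ k * ρ * (Γ k)ᴴ * ρ⁻¹) * g⁻¹ := by
    intro k
    have h1 : Γ k * g = g * Γ k := (hgΓ k).symm
    have h2 : gᴴ * (Γ k)ᴴ = (Γ k)ᴴ * gᴴ := by
      rw [← Matrix.conjTranspose_mul, ← Matrix.conjTranspose_mul, hgΓ k]
    calc Γ k * (g * ρ * gᴴ) * (Γ k)ᴴ * (g * ρ * gᴴ)⁻¹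
        = Γ k * g * ρ * (gᴴ * (Γ k)ᴴ) * ((gᴴ)⁻¹ * ρ⁻¹ * g⁻¹) := by
          rw [hrev]; noncomm_ring
      _ = g * Γ k * ρ * ((Γ k)ᴴ * gᴴ) * ((gᴴ)⁻¹ * ρ⁻¹ * g⁻¹) := by rw [h1, h2]
      _ = g * (Γ k * ρ * (Γ k)ᴴ) * (gᴴ * (gᴴ)⁻¹) * (ρ⁻¹ * g⁻¹) := by noncomm_ring
      _ = g * (Γ k * ρ * (Γ k)ᴴ * ρ⁻¹) * g⁻¹ := by rw [hgHinv]; noncomm_ring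
  have hHcomm : g * Heff * g⁻¹ = Heff := by
    rw [hgH, mul_assoc, hginv, mul_one]
  calc Heff + (Complex.I / 2) • ∑ k, (γ k : ℂ) •
          (Γ k * (g * ρ * gᴴ) * (Γ k)ᴴ * (g * ρ * gᴴ)⁻¹)
      = g * Heff * g⁻¹ + (Complex.I / 2) • ∑ k, (γ k : ℂ) •
          (g * (Γ k * ρ * (Γ k)ᴴ * ρ⁻¹) * g⁻¹) := by
        rw [hHcomm]
        congr 2
        exact Finset.sum_congr rfl fun k _ => by rw [hterm k]
    _ = g * (Heff + (Complex.I / 2) • ∑ k, (γ k : ℂ) •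
          (Γ k * ρ * (Γ k)ᴴ * ρ⁻¹)) * g⁻¹ := by
        rw [Matrix.mul_add, Matrix.add_mul, Matrix.mul_smul, Matrix.smul_mul,
          Finset.mul_sum, Finset.sum_mul]
        congr 2
        exact Finset.sum_congr rfl fun k _ => by
          rw [Matrix.mul_smul, Matrix.smul_mul]
end

section
/- Let W be an invertible n×n complex matrix, ρ = W*Wᴴ, and let X be an n×n complex matrix satisfying X*ρ + ρ*Xᴴ = 0 (i.e. X lies in the stabilizer Lie algebra of ρ). Then X*W = −W*(W⁻¹*X*W)ᴴ; that is, the left action of X on the purification matrix is equivalent to the right action of −(W⁻¹XW)ᴴ. -/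
open Matrix Complex

/-- An element `X` of the stabilizer Lie algebra of `ρ = W Wᴴ` acting on the
left of the purification matrix `W` is equivalent to the right action of
`-(W⁻¹ X W)ᴴ`. -/
theorem stabilizer_left_action_eq_right_action
    {n : Type*} [Fintype n] [DecidableEq n]
    (W X : Matrix n n ℂ) (hW : IsUnit W)
    (hX : X * (W * Wᴴ) + (W * Wᴴ) * Xᴴ = 0) :
    X * W = - (W * (W⁻¹ * X * W)ᴴ) := by
  have hd : IsUnit W.det := (Matrix.isUnit_iff_isUnit_det W).mp hW
  have hdH : IsUnit Wᴴ.det := by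
    rw [Matrix.det_conjTranspose]
    exact hd.star
  have h1 : X * (W * Wᴴ) = -((W * Wᴴ) * Xᴴ) := eq_neg_of_add_eq_zero_left hX
  have key : W * (W⁻¹ * X * W)ᴴ = W * Wᴴ * Xᴴ * Wᴴ⁻¹ := by
    rw [conjTranspose_mul, conjTranspose_mul, conjTranspose_nonsing_inv]
    noncomm_ring
  rw [key]
  have h2 : X * W = X * (W * Wᴴ) * Wᴴ⁻¹ := by
    rw [mul_assoc, mul_assoc, Matrix.mul_nonsing_inv _ hdH, mul_one]
  rw [h2, h1]
  simp [mul_assoc]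
end

section
/- Let ρ be a Hermitian invertible n×n complex matrix, g and W and V invertible n×n complex matrices with W*Wᴴ = ρ and V*Vᴴ = g*ρ*gᴴ (two purifications of ρ and of g ρ gᴴ respectively). Let W', V', g' be matrices (the derivatives) satisfying the compatibility condition V'*Vᴴ + V*(V')ᴴ = g'*ρ*gᴴ + g*(W'*Wᴴ + W*(W')ᴴ)*gᴴ + g*ρ*(g')ᴴ. Then η := g⁻¹*(V'*V⁻¹)*g − W'*W⁻¹ − g⁻¹*g' satisfies η*ρ + ρ*ηᴴ = 0. Equivalently, the geometric phase generator transforms under the gauge change ρ ↦ g ρ gᴴ as 𝔄(gρgᴴ) = g·𝔄(ρ)·g⁻¹ + dg·g⁻¹ + g·η·g⁻¹ with η a gauge change of the second kind valued in the stabilizer Lie algebra. -/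
open Matrix Complex

/-- Gauge transformation rule for the geometric phase generator: under
`ρ ↦ g ρ gᴴ`, the difference
`η = g⁻¹ (V' V⁻¹) g - W' W⁻¹ - g⁻¹ g'` is a gauge change of the second kind,
i.e. it lies in the stabilizer Lie algebra of `ρ`. -/
theorem gauge_change_second_kind
    {n : Type*} [Fintype n] [DecidableEq n]
    (ρ g W V : Matrix n n ℂ)
    (hρH : ρ.IsHermitian) (hρ : IsUnit ρ)
    (hg : IsUnit g) (hW : IsUnit W) (hV : IsUnit V)
    (hWρ : W * Wᴴ = ρ) (hVρ : V * Vᴴ = g * ρ * gᴴ)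
    (W' V' g' : Matrix n n ℂ)
    (hcompat : V' * Vᴴ + V * (V')ᴴ
      = g' * ρ * gᴴ + g * (W' * Wᴴ + W * (W')ᴴ) * gᴴ + g * ρ * (g')ᴴ) :
    (g⁻¹ * (V' * V⁻¹) * g - W' * W⁻¹ - g⁻¹ * g') * ρ
      + ρ * (g⁻¹ * (V' * V⁻¹) * g - W' * W⁻¹ - g⁻¹ * g')ᴴ = 0 := by
  have hgd := (Matrix.isUnit_iff_isUnit_det g).mp hg
  have hWd := (Matrix.isUnit_iff_isUnit_det W).mp hW
  have hVd := (Matrix.isUnit_iff_isUnit_det V).mp hV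
  have hg1 : g * g⁻¹ = 1 := Matrix.mul_nonsing_inv g hgd
  have hg2 : g⁻¹ * g = 1 := Matrix.nonsing_inv_mul g hgd
  have hV2 : V⁻¹ * V = 1 := Matrix.nonsing_inv_mul V hVd
  have hWinvρ : W⁻¹ * ρ = Wᴴ := by
    rw [← hWρ, ← Matrix.mul_assoc, Matrix.nonsing_inv_mul W hWd, Matrix.one_mul]
  have hρWinvH : ρ * (W⁻¹)ᴴ = W := by
    have h := congrArg conjTranspose hWinvρ
    simpa [Matrix.conjTranspose_mul, hρH.eq] using h
  have hVinvH : Vᴴ * (V⁻¹)ᴴ = 1 := by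
    rw [← Matrix.conjTranspose_mul, hV2, Matrix.conjTranspose_one]
  have hginvH : (g⁻¹)ᴴ * gᴴ = 1 := by
    rw [← Matrix.conjTranspose_mul, hg1, Matrix.conjTranspose_one]
  have hgHinvH : gᴴ * (g⁻¹)ᴴ = 1 := by
    rw [← Matrix.conjTranspose_mul, hg2, Matrix.conjTranspose_one]
  set E := (g⁻¹ * (V' * V⁻¹) * g - W' * W⁻¹ - g⁻¹ * g') * ρ
      + ρ * (g⁻¹ * (V' * V⁻¹) * g - W' * W⁻¹ - g⁻¹ * g')ᴴ with hEdef
  have key : g * E * gᴴ = 0 := by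
    have e1 : g * ((g⁻¹ * (V' * V⁻¹) * g - W' * W⁻¹ - g⁻¹ * g') * ρ) * gᴴ
        = V' * Vᴴ - g * (W' * Wᴴ) * gᴴ - g' * ρ * gᴴ := by
      simp only [Matrix.sub_mul, Matrix.mul_sub, Matrix.mul_assoc]
      rw [← Matrix.mul_assoc g g⁻¹, hg1, Matrix.one_mul]
      rw [← Matrix.mul_assoc g g⁻¹, hg1, Matrix.one_mul]
      rw [show W⁻¹ * (ρ * gᴴ) = Wᴴ * gᴴ by rw [← Matrix.mul_assoc, hWinvρ]]
      rw [show V⁻¹ * (g * (ρ * gᴴ)) = V⁻¹ * (V * Vᴴ) from by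
        rw [hVρ]; simp [Matrix.mul_assoc]]
      rw [← Matrix.mul_assoc V⁻¹ V, hV2, Matrix.one_mul]
    have e2 : g * (ρ * (g⁻¹ * (V' * V⁻¹) * g - W' * W⁻¹ - g⁻¹ * g')ᴴ) * gᴴ
        = V * V'ᴴ - g * (W * W'ᴴ) * gᴴ - g * ρ * g'ᴴ := by
      simp only [Matrix.conjTranspose_sub, Matrix.conjTranspose_mul,
        Matrix.mul_sub, Matrix.sub_mul, Matrix.mul_assoc]
      rw [hginvH]
      simp only [Matrix.mul_one]
      rw [← Matrix.mul_assoc ρ (W⁻¹)ᴴ, hρWinvH]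
      rw [show g * (ρ * (gᴴ * ((V⁻¹)ᴴ * V'ᴴ))) = V * V'ᴴ from by
        rw [show g * (ρ * (gᴴ * ((V⁻¹)ᴴ * V'ᴴ))) = (g * ρ * gᴴ) * (V⁻¹)ᴴ * V'ᴴ from by
          simp [Matrix.mul_assoc], ← hVρ, Matrix.mul_assoc V, hVinvH, Matrix.mul_one]]
    rw [hEdef, Matrix.mul_add, Matrix.add_mul, e1, e2]
    have := hcompat
    abel_nf
    abel_nf at this
    linear_combination (norm := noncomm_ring) this
  have : E = g⁻¹ * (g * E * gᴴ) * (g⁻¹)ᴴ := by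
    rw [← Matrix.mul_assoc, ← Matrix.mul_assoc, hg2, Matrix.one_mul,
      Matrix.mul_assoc, hgHinvH, Matrix.mul_one]
  rw [this, key]
  simp
end

section
/- Let W be an n×n complex matrix with Moore–Penrose pseudoinverse W⁺ and set ρ = W*Wᴴ. Let W_s, W_t, W_{st} be n×n complex matrices (partial derivatives, with symmetric mixed second derivative), set 𝔄_s = W_s*W⁺ and 𝔄_t = W_t*W⁺, and let D_s𝔄_t and D_t𝔄_s be matrices satisfying the differentiated identities (D_s𝔄_t)*ρ + 𝔄_t*(W_s*Wᴴ + W*W_sᴴ) = W_{st}*Wᴴ + W_t*W_sᴴ and (D_t𝔄_s)*ρ + 𝔄_s*(W_t*Wᴴ + W*W_tᴴ) = W_{st}*Wᴴ + W_s*W_tᴴ. Then the left curving B = D_s𝔄_t − D_t𝔄_s − (𝔄_s*𝔄_t − 𝔄_t*𝔄_s) lies in the stabilizer Lie algebra of ρ: B*ρ + ρ*Bᴴ = 0. -/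
open Matrix Complex

/-- The left curving `B^L = d𝔄 - 𝔄 ∧ 𝔄` lies in the stabilizer Lie algebra of
`ρ = W Wᴴ`: `B ρ + ρ Bᴴ = 0`. -/
theorem left_curving_mem_stabilizer_lie_algebra
    {n : Type*} [Fintype n] [DecidableEq n]
    (W Wp : Matrix n n ℂ)
    (hp1 : W * Wp * W = W) (hp2 : Wp * W * Wp = Wp)
    (hp3 : (W * Wp)ᴴ = W * Wp) (hp4 : (Wp * W)ᴴ = Wp * W)
    (Ws Wt Wst DsAt DtAs : Matrix n n ℂ)
    (hDsAt : DsAt * (W * Wᴴ) + (Wt * Wp) * (Ws * Wᴴ + W * Wsᴴ)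
      = Wst * Wᴴ + Wt * Wsᴴ)
    (hDtAs : DtAs * (W * Wᴴ) + (Ws * Wp) * (Wt * Wᴴ + W * Wtᴴ)
      = Wst * Wᴴ + Ws * Wtᴴ) :
    (DsAt - DtAs - ((Ws * Wp) * (Wt * Wp) - (Wt * Wp) * (Ws * Wp))) * (W * Wᴴ)
      + (W * Wᴴ) *
        (DsAt - DtAs - ((Ws * Wp) * (Wt * Wp) - (Wt * Wp) * (Ws * Wp)))ᴴ = 0 := by
  -- key: Wp * (W * Wᴴ) = Wᴴ
  have h1 : Wp * (W * Wᴴ) = Wᴴ := by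
    calc Wp * (W * Wᴴ) = (Wp * W) * Wᴴ := by rw [mul_assoc]
    _ = (Wp * W)ᴴ * Wᴴ := by rw [hp4]
    _ = (W * (Wp * W))ᴴ := by simp [conjTranspose_mul, mul_assoc]
    _ = Wᴴ := by rw [← mul_assoc, hp1]
  have hp4' : Wᴴ * Wpᴴ = Wp * W := by
    rw [← conjTranspose_mul, hp4]
  have e1 : DsAt * (W * Wᴴ)
      = Wst * Wᴴ + Wt * Wsᴴ - (Wt * Wp) * (Ws * Wᴴ + W * Wsᴴ) :=
    eq_sub_of_add_eq hDsAt
  have e2 : DtAs * (W * Wᴴ)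
      = Wst * Wᴴ + Ws * Wtᴴ - (Ws * Wp) * (Wt * Wᴴ + W * Wtᴴ) :=
    eq_sub_of_add_eq hDtAs
  have hB : (DsAt - DtAs - ((Ws * Wp) * (Wt * Wp) - (Wt * Wp) * (Ws * Wp))) * (W * Wᴴ)
      = (Wt * Wsᴴ - Wt * (Wp * (W * Wsᴴ))) - (Ws * Wtᴴ - Ws * (Wp * (W * Wtᴴ))) := by
    rw [sub_mul, sub_mul, sub_mul, e1, e2]
    simp only [mul_add, mul_sub, sub_mul, add_mul, mul_assoc, h1]
    abel
  have hρ : (W * Wᴴ) * (DsAt - DtAs - ((Ws * Wp) * (Wt * Wp) - (Wt * Wp) * (Ws * Wp)))ᴴ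
      = ((DsAt - DtAs - ((Ws * Wp) * (Wt * Wp) - (Wt * Wp) * (Ws * Wp))) * (W * Wᴴ))ᴴ := by
    rw [conjTranspose_mul, conjTranspose_mul, conjTranspose_conjTranspose]
  rw [hB, hρ, hB]
  simp only [conjTranspose_sub, conjTranspose_mul, conjTranspose_conjTranspose, mul_assoc, hp4']
  simp only [← mul_assoc]
  abel
end

section
/- Let H be a Hermitian n×n complex matrix, (Γ_k) a finite family of n×n complex matrices and (γ_k) real numbers. Let ψ and ψ₀ be unit vectors in ℂⁿ (⟨ψ,ψ⟩ = 1 = ⟨ψ₀,ψ₀⟩) and set W = |ψ⟩⟨ψ₀| (the rank-one matrix with entries ψ_i·conj((ψ₀)_j)) and W⁺ = |ψ₀⟩⟨ψ|. Then the nonlinear term of the purified Schrödinger equation reduces on the pure-state stratum: H_eff*W + (i/2)·Σ_k γ_k·Γ_k*W*Wᴴ*Γ_kᴴ*(W⁺)ᴴ = |H_eff·ψ + (i/2)·Σ_k γ_k·⟨ψ, Γ_kᴴ·ψ⟩·Γ_k·ψ⟩⟨ψ₀|; i.e. the purified dynamics restricted to pure states is governed by i·ħ·ψ' = H_eff·ψ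 + (i/2)·Σ_k γ_k·⟨Γ_kᴴ⟩_ψ·Γ_k·ψ. -/
open Matrix Complex BigOperators

section Aux

variable {n : Type*} [Fintype n] [DecidableEq n]

lemma aux_mul_vecMulVec (M : Matrix n n ℂ) (a b : n → ℂ) :
    M * Matrix.vecMulVec a b = Matrix.vecMulVec (M.mulVec a) b := by
  ext i j
  simp [Matrix.mul_apply, Matrix.vecMulVec_apply, Matrix.mulVec, dotProduct,
    Finset.sum_mul, mul_assoc]

lemma aux_vecMulVec_mul (a b : n → ℂ) (M : Matrix n n ℂ) :
    Matrix.vecMulVec a b * M = Matrix.vecMulVec a (Matrix.vecMul b M) := by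
  ext i j
  simp [Matrix.mul_apply, Matrix.vecMulVec_apply, Matrix.vecMul, dotProduct,
    Finset.mul_sum, mul_assoc]

lemma aux_vecMulVec_mul_vecMulVec (a b c d : n → ℂ) :
    Matrix.vecMulVec a b * Matrix.vecMulVec c d
      = (b ⬝ᵥ c) • Matrix.vecMulVec a d := by
  ext i j
  simp [Matrix.mul_apply, Matrix.vecMulVec_apply, dotProduct, Finset.sum_mul,
    Finset.mul_sum]
  apply Finset.sum_congr rfl
  intro x _
  ring

lemma aux_vecMulVec_conjTranspose (a b : n → ℂ) :
    (Matrix.vecMulVec a b)ᴴ = Matrix.vecMulVec (star b) (star a) := by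
  ext i j
  simp [Matrix.vecMulVec_apply, mul_comm]

end Aux

/-- On the pure-state stratum, with `W = |ψ⟩⟨ψ₀|` and `W⁺ = |ψ₀⟩⟨ψ|`, the
nonlinear term of the purified Schrödinger equation reduces to
`|H_eff ψ + (i/2) Σ γ_k ⟨ψ, Γ_kᴴ ψ⟩ Γ_k ψ⟩⟨ψ₀|`. -/
theorem nlse_reduces_on_pure_state_stratum
    {n K : Type*} [Fintype n] [DecidableEq n] [Fintype K]
    (H : Matrix n n ℂ) (hH : H.IsHermitian)
    (Γ : K → Matrix n n ℂ) (γ : K → ℝ)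
    (ψ ψ₀ : n → ℂ) (hψ : star ψ ⬝ᵥ ψ = 1) (hψ₀ : star ψ₀ ⬝ᵥ ψ₀ = 1) :
    (H - (Complex.I / 2) • ∑ k, (γ k : ℂ) • ((Γ k)ᴴ * Γ k))
        * Matrix.vecMulVec ψ (star ψ₀)
      + (Complex.I / 2) • ∑ k, (γ k : ℂ) •
          (Γ k * Matrix.vecMulVec ψ (star ψ₀) * (Matrix.vecMulVec ψ (star ψ₀))ᴴ
            * (Γ k)ᴴ * (Matrix.vecMulVec ψ₀ (star ψ))ᴴ)
    = Matrix.vecMulVec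
        ((H - (Complex.I / 2) • ∑ k, (γ k : ℂ) • ((Γ k)ᴴ * Γ k)).mulVec ψ
          + (Complex.I / 2) • ∑ k, (γ k : ℂ) •
              ((star ψ ⬝ᵥ ((Γ k)ᴴ.mulVec ψ)) • (Γ k).mulVec ψ))
        (star ψ₀) := by
  have hW : (Matrix.vecMulVec ψ (star ψ₀))ᴴ = Matrix.vecMulVec ψ₀ (star ψ) := by
    rw [aux_vecMulVec_conjTranspose]; simp
  have hW' : (Matrix.vecMulVec ψ₀ (star ψ))ᴴ = Matrix.vecMulVec ψ (star ψ₀) := by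
    rw [aux_vecMulVec_conjTranspose]; simp
  have key : ∀ k, Γ k * Matrix.vecMulVec ψ (star ψ₀) * (Matrix.vecMulVec ψ (star ψ₀))ᴴ
            * (Γ k)ᴴ * (Matrix.vecMulVec ψ₀ (star ψ))ᴴ
      = (star ψ ⬝ᵥ ((Γ k)ᴴ.mulVec ψ)) • Matrix.vecMulVec ((Γ k).mulVec ψ) (star ψ₀) := by
    intro k
    rw [hW, hW', aux_mul_vecMulVec (Γ k) ψ (star ψ₀),
      aux_vecMulVec_mul_vecMulVec ((Γ k).mulVec ψ) (star ψ₀) ψ₀ (star ψ), hψ₀, one_smul,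
      aux_vecMulVec_mul ((Γ k).mulVec ψ) (star ψ) ((Γ k)ᴴ),
      aux_vecMulVec_mul_vecMulVec, ← Matrix.dotProduct_mulVec]
  rw [aux_mul_vecMulVec]
  simp only [key]
  ext i j
  simp [Matrix.vecMulVec_apply, Matrix.add_apply, Matrix.smul_apply, Matrix.sum_apply,
    Finset.mul_sum]
  rw [add_mul, Finset.sum_mul]
  congr 1
  apply Finset.sum_congr rfl
  intro k _
  ring
end
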